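/- arXiv:1009.2355 — 2 statements merged into one kernel-verified Lean document; each statement's English description precedes it below -/
import Mathlib

section
/- Let V be a finite-dimensional vector space, x ∈ End(V), W := ker x, and let y ∈ End(V/W) be the endomorphism induced by x. Suppose ȳ ∈ End(V/W) satisfies [y, ȳ] = 0. Then there exists x̄ ∈ End(V) such that [x, x̄] = 0 and the endomorphism of V/W induced by x̄ equals ȳ. -/
/-- Lemma 6.1 (ungraded form): if `ȳ` commutes with the endomorphism `y` of
`V / ker x` induced by `x`, then `ȳ` lifts to an endomorphism `x̄` of `V`
commuting with `x` and inducing `ȳ` on the quotient. -/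
theorem stmt_3 {V : Type*} [AddCommGroup V] [Module ℂ V] [FiniteDimensional ℂ V]
    (x : Module.End ℂ V)
    (hx : LinearMap.ker x ≤ (LinearMap.ker x).comap x)
    (ybar : Module.End ℂ (V ⧸ LinearMap.ker x))
    (hcomm : Commute ((LinearMap.ker x).mapQ (LinearMap.ker x) x hx) ybar) :
    ∃ (xbar : Module.End ℂ V) (h : LinearMap.ker x ≤ (LinearMap.ker x).comap xbar),
      Commute x xbar ∧
      (LinearMap.ker x).mapQ (LinearMap.ker x) xbar h = ybar := by
  classical
  set y : Module.End ℂ (V ⧸ LinearMap.ker x) := (LinearMap.ker x).mapQ (LinearMap.ker x) x hx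
    with hy
  -- a section of the quotient map
  obtain ⟨s, hs⟩ := (LinearMap.ker x).mkQ.exists_rightInverse_of_surjective
    (by rw [LinearMap.range_eq_top]; exact Submodule.mkQ_surjective _)
  have hsq : ∀ q, (LinearMap.ker x).mkQ (s q) = q := fun q => LinearMap.congr_fun hs q
  -- the injective map induced by x on the quotient
  set x' : (V ⧸ LinearMap.ker x) →ₗ[ℂ] V := (LinearMap.ker x).liftQ x le_rfl with hx'
  have hx'π : ∀ v : V, x' ((LinearMap.ker x).mkQ v) = x v := fun v => rfl
  have hπx' : ∀ v : V, (LinearMap.ker x).mkQ (x v) = y ((LinearMap.ker x).mkQ v) := fun v => rfl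
  have hxs : ∀ q, x (s q) = x' q := fun q => by
    rw [← hx'π (s q), hsq]
  -- the "error" map, landing in ker x
  set e : (V ⧸ LinearMap.ker x) →ₗ[ℂ] V := x' - s ∘ₗ y with he
  have heW : ∀ q, e q ∈ LinearMap.ker x := by
    intro q
    obtain ⟨v, rfl⟩ := Submodule.mkQ_surjective (LinearMap.ker x) q
    have : e ((LinearMap.ker x).mkQ v)
        = x' ((LinearMap.ker x).mkQ v) - s (y ((LinearMap.ker x).mkQ v)) := rfl
    rw [LinearMap.mem_ker, this, map_sub, hx'π, ← hπx' v, hxs, hx'π, sub_self]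
  set e' : (V ⧸ LinearMap.ker x) →ₗ[ℂ] LinearMap.ker x := e.codRestrict _ heW with he'
  -- extend (e' ∘ ybar) ∘ (quotKerEquivRange x).symm from range x to all of V
  set f0 : LinearMap.range x →ₗ[ℂ] LinearMap.ker x :=
    (e' ∘ₗ ybar) ∘ₗ x.quotKerEquivRange.symm.toLinearMap with hf0
  obtain ⟨w', hw'⟩ := f0.exists_extend
  set w : V →ₗ[ℂ] V := (LinearMap.ker x).subtype ∘ₗ w' with hw
  have hwW : ∀ v, w v ∈ LinearMap.ker x := fun v => (w' v).2
  have hwx : ∀ v : V, w (x v) = e (ybar ((LinearMap.ker x).mkQ v)) := by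
    intro v
    have h1 : x.quotKerEquivRange.symm ⟨x v, LinearMap.mem_range_self x v⟩
        = (LinearMap.ker x).mkQ v := by
      rw [LinearEquiv.symm_apply_eq]
      exact Subtype.ext (x.quotKerEquivRange_apply_mk v).symm
    have h2 : w' ((LinearMap.range x).subtype ⟨x v, LinearMap.mem_range_self x v⟩)
        = f0 ⟨x v, LinearMap.mem_range_self x v⟩ := LinearMap.congr_fun hw' _
    have h3 : w (x v) = (f0 ⟨x v, LinearMap.mem_range_self x v⟩ : V) := congrArg Subtype.val h2
    rw [h3, hf0]
    simp only [LinearMap.comp_apply, LinearEquiv.coe_coe, h1]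
    rfl
  -- the lift
  refine ⟨(s ∘ₗ ybar) ∘ₗ (LinearMap.ker x).mkQ + w, ?_, ?_, ?_⟩
  · intro v hv
    have hv0 : (LinearMap.ker x).mkQ v = 0 := (Submodule.Quotient.mk_eq_zero _).2 hv
    simp only [Submodule.mem_comap, LinearMap.add_apply, LinearMap.comp_apply, hv0,
      map_zero, zero_add]
    exact hwW v
  · refine LinearMap.ext fun v => ?_
    have hc : ∀ q, y (ybar q) = ybar (y q) := fun q => LinearMap.congr_fun hcomm q
    show x (s (ybar ((LinearMap.ker x).mkQ v)) + w v)
        = s (ybar ((LinearMap.ker x).mkQ (x v))) + w (x v)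
    rw [map_add, hxs, LinearMap.mem_ker.mp (hwW v), hwx, hπx', ← hc]
    have h4 : e (ybar ((LinearMap.ker x).mkQ v))
        = x' (ybar ((LinearMap.ker x).mkQ v)) - s (y (ybar ((LinearMap.ker x).mkQ v))) := rfl
    rw [h4]
    abel
  · refine LinearMap.ext fun q => ?_
    obtain ⟨v, rfl⟩ := Submodule.mkQ_surjective (LinearMap.ker x) q
    rw [Submodule.mkQ_apply, Submodule.mapQ_apply]
    show (LinearMap.ker x).mkQ (s (ybar ((LinearMap.ker x).mkQ v)) + w v)
        = ybar ((LinearMap.ker x).mkQ v)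
    rw [map_add, hsq, show (LinearMap.ker x).mkQ (w v) = 0 from
      (Submodule.Quotient.mk_eq_zero _).2 (hwW v), add_zero]
end

section
/- Let V be a finite-dimensional vector space and let x, x̄ ∈ End(V) commute. Let x̂ denote the endomorphism of ker((x x̄)^{k+1}) / ker((x x̄)^k) induced by x. Then dim ker(x̂) = dim ker(x ∘ (x x̄)^k) − dim ker((x x̄)^k). -/
/-- For commuting endomorphisms `x, x̄`, the kernel of the endomorphism `x̂`
induced by `x` on `ker((x x̄)^{k+1}) / ker((x x̄)^k)` has dimension
`dim ker(x ∘ (x x̄)^k) − dim ker((x x̄)^k)` (stated additively). -/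
theorem stmt_4 {V : Type*} [AddCommGroup V] [Module ℂ V] [FiniteDimensional ℂ V]
    (x xbar : Module.End ℂ V) (h : Commute x xbar) (k : ℕ)
    -- `xr` is the restriction of `x` to `ker((x x̄)^{k+1})`
    (xr : Module.End ℂ (LinearMap.ker ((x * xbar) ^ (k + 1))))
    (hxr : ∀ v : LinearMap.ker ((x * xbar) ^ (k + 1)), (xr v : V) = x v)
    -- `p` is `ker((x x̄)^k)` viewed inside `ker((x x̄)^{k+1})`
    (p : Submodule ℂ (LinearMap.ker ((x * xbar) ^ (k + 1))))
    (hp : p = (LinearMap.ker ((x * xbar) ^ k)).comap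
        (LinearMap.ker ((x * xbar) ^ (k + 1))).subtype)
    (hinv : p ≤ p.comap xr) :
    Module.finrank ℂ (LinearMap.ker (p.mapQ p xr hinv))
      + Module.finrank ℂ (LinearMap.ker ((x * xbar) ^ k))
    = Module.finrank ℂ (LinearMap.ker (x * (x * xbar) ^ k)) := by
  classical
  have hc : Commute x ((x * xbar) ^ k) := ((Commute.refl x).mul_right h).pow_right k
  have hswap : ∀ v : V, ((x * xbar) ^ k) (x v) = (x * (x * xbar) ^ k) v := by
    intro v
    rw [Module.End.mul_apply, ← Module.End.mul_apply, ← Module.End.mul_apply, hc.eq]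
  -- ker((x x̄)^k) ≤ ker(x (x x̄)^k)
  have hkerK : LinearMap.ker ((x * xbar) ^ k) ≤ LinearMap.ker (x * (x * xbar) ^ k) := by
    intro v hv
    rw [LinearMap.mem_ker] at hv ⊢
    rw [Module.End.mul_apply, hv, map_zero]
  -- ker(x (x x̄)^k) ≤ ker((x x̄)^(k+1))
  have hKN : LinearMap.ker (x * (x * xbar) ^ k) ≤ LinearMap.ker ((x * xbar) ^ (k + 1)) := by
    intro v hv
    rw [LinearMap.mem_ker] at hv ⊢
    have hpow : (x * xbar) ^ (k + 1) = xbar * (x * (x * xbar) ^ k) := by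
      rw [pow_succ', ← mul_assoc, ← h.eq]
    rw [hpow, Module.End.mul_apply, hv, map_zero]
  have hkerN : LinearMap.ker ((x * xbar) ^ k) ≤ LinearMap.ker ((x * xbar) ^ (k + 1)) :=
    hkerK.trans hKN
  set K' : Submodule ℂ (LinearMap.ker ((x * xbar) ^ (k + 1))) :=
    (LinearMap.ker (x * (x * xbar) ^ k)).comap
      (LinearMap.ker ((x * xbar) ^ (k + 1))).subtype with hK'
  -- p ≤ K'
  have hpK' : p ≤ K' := by
    rw [hp, hK']
    intro v hv
    exact hkerK hv
  -- the comap of p under xr is exactly K'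
  have hcomap : p.comap xr = K' := by
    ext v
    rw [Submodule.mem_comap, hp, hK', Submodule.mem_comap, Submodule.mem_comap,
      LinearMap.mem_ker, LinearMap.mem_ker]
    show ((x * xbar) ^ k) ((xr v : V)) = 0 ↔ (x * (x * xbar) ^ k) (v : V) = 0
    rw [hxr, hswap]
  -- ker of the induced map
  have hker : LinearMap.ker (p.mapQ p xr hinv) = K'.map p.mkQ := by
    rw [Submodule.mapQ, Submodule.ker_liftQ, LinearMap.ker_comp, Submodule.ker_mkQ, hcomap]
  -- rank-nullity for f : K' → N ⧸ p
  set f := p.mkQ ∘ₗ K'.subtype with hf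
  have hrange : LinearMap.range f = K'.map p.mkQ := by
    rw [hf, LinearMap.range_comp, Submodule.range_subtype]
  have hkerf : LinearMap.ker f = p.comap K'.subtype := by
    rw [hf, LinearMap.ker_comp, Submodule.ker_mkQ]
  have e1 : Module.finrank ℂ (LinearMap.ker (p.mapQ p xr hinv))
      = Module.finrank ℂ (LinearMap.range f) := by rw [hker, hrange]
  have e2 : Module.finrank ℂ (LinearMap.ker f) = Module.finrank ℂ p := by
    rw [hkerf]
    exact (Submodule.comapSubtypeEquivOfLe hpK').finrank_eq
  have e3 : Module.finrank ℂ p = Module.finrank ℂ (LinearMap.ker ((x * xbar) ^ k)) := by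
    rw [hp]
    exact (Submodule.comapSubtypeEquivOfLe hkerN).finrank_eq
  have e4 : Module.finrank ℂ K' = Module.finrank ℂ (LinearMap.ker (x * (x * xbar) ^ k)) :=
    (Submodule.comapSubtypeEquivOfLe hKN).finrank_eq
  have rn := LinearMap.finrank_range_add_finrank_ker f
  rw [e1, ← e3, ← e2, rn, e4]
end
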